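/- Generalized MED optimality for nonlinear opponent processes: for a G-LPOP g, if a dosing sequence (u*_t) maintains y*_t ≥ y_min for all t with minimal cumulative dose, then u*_t is the minimum effective dose at every t. Specifically, the perturbation u'_{t₀} = u*_{t₀} − ε, u'_{t₀+1} = u*_{t₀+1} + αε yields, by the mean value theorem, y'_{t+1} = y*_{t+1} − ε·∂_u g(t−t₀, ξ₀) + αε·∂_u g(t−t₀−1, ξ₁) ≥ y*_{t+1} for all t > t₀ (for some intermediate points ξ₀, ξ₁), while strictly reducing the cumulative dose. -/
import Mathlib


/-- Nonlinear well-being dynamics: `y_{t+1} = Σ_{k=0}^{t} g(k, u_{t-k}) + y^nat_{t+1}`. -/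
noncomputable def wbN (g : ℕ → ℝ → ℝ) (u ynat : ℕ → ℝ) : ℕ → ℝ
  | 0 => ynat 0
  | t + 1 => (∑ k ∈ Finset.range (t + 1), g k (u (t - k))) + ynat (t + 1)

lemma gp_nonpos_of_pos_index (g gp : ℕ → ℝ → ℝ)
    (hderiv : ∀ t x, HasDerivAt (g t) (gp t x) x)
    (τ₀ : ℕ) (α : ℝ) (hα0 : 0 < α)
    (hpos : ∀ τ, τ < τ₀ → (∀ x, 0 ≤ g τ x) ∧ (∀ x, 0 ≤ gp τ x))
    (hneg : ∀ τ, τ₀ ≤ τ → (∀ x, g τ x ≤ 0) ∧ (∀ x, gp τ x ≤ 0))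
    (hsep1 : ∀ t, t + 1 < τ₀ → ∀ x y, gp (t + 1) x ≤ α * gp t y) :
    ∀ k x, 1 ≤ k → gp k x ≤ 0 := by
  intro k x hk
  rcases le_or_gt τ₀ k with h | h
  · exact (hneg k h).2 x
  · by_contra hc
    push_neg at hc
    obtain ⟨t, rfl⟩ : ∃ t, k = t + 1 := ⟨k - 1, by omega⟩
    have ht : t + 1 < τ₀ := h
    set m : ℝ := gp (t + 1) x / α with hm
    have hm0 : 0 < m := div_pos hc hα0
    have hlb : ∀ y, m ≤ gp t y := by
      intro y
      rw [hm, div_le_iff₀ hα0]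
      have := hsep1 t ht x y
      linarith
    have hmono : Monotone (fun z => g t z - m * z) := by
      apply monotone_of_deriv_nonneg
      · intro z
        exact ((hderiv t z).sub ((hasDerivAt_id z).const_mul m)).differentiableAt
      · intro z
        have hd : HasDerivAt (fun z => g t z - m * z) (gp t z - m * 1) z :=
          (hderiv t z).sub ((hasDerivAt_id z).const_mul m)
        rw [hd.deriv]
        have := hlb z
        linarith
    have hz0 : (0 : ℝ) ≤ g t 0 := (hpos t (by omega)).1 0
    have hzle : (-(g t 0 / m) - 1 : ℝ) ≤ 0 := by
      have : 0 ≤ g t 0 / m := div_nonneg hz0 hm0.le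
      linarith
    have := hmono hzle
    simp only at this
    have hcanc : m * (g t 0 / m) = g t 0 := by field_simp
    have hneg' : g t (-(g t 0 / m) - 1) < 0 := by
      have h2 : g t (-(g t 0 / m) - 1) - m * (-(g t 0 / m) - 1) ≤ g t 0 - m * 0 := this
      nlinarith
    exact absurd ((hpos t (by omega)).1 _) (not_le.mpr hneg')

/-- generalized MED optimality for nonlinear opponent processes.  For a
G-LPOP `g` (generalized opponent process with dose-derivative `gp` satisfying the sign and
separation conditions with constant `α ∈ (0,1)`), if a nonnegative dosing sequence keeps
`y_t ≥ y_min` for `t = 1,…,T` with minimal cumulative dose, then it takes the minimum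
effective dose at every `t < T` (i.e. `y_{t+1} = y_min` or `u_t = 0`). -/
theorem generalized_med_optimal (g gp : ℕ → ℝ → ℝ) (ynat : ℕ → ℝ)
    (hderiv : ∀ t x, HasDerivAt (g t) (gp t x) x)
    (τ₀ : ℕ) (α : ℝ) (hα0 : 0 < α) (hα1 : α < 1)
    -- generalized opponent process conditions
    (hpos : ∀ τ, τ < τ₀ → (∀ x, 0 ≤ g τ x) ∧ (∀ x, 0 ≤ gp τ x))
    (hneg : ∀ τ, τ₀ ≤ τ → (∀ x, g τ x ≤ 0) ∧ (∀ x, gp τ x ≤ 0))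
    -- G-LPOP separation conditions: `∂⁺(t+1) ≤ α·∂⁻(t)` before `τ₀`, `∂⁻(t+1) ≥ α·∂⁺(t)` after
    (hsep1 : ∀ t, t + 1 < τ₀ → ∀ x y, gp (t + 1) x ≤ α * gp t y)
    (hsep2 : ∀ t, τ₀ ≤ t → ∀ x y, α * gp t x ≤ gp (t + 1) y)
    (ymin : ℝ) (T : ℕ) (u : ℕ → ℝ)
    (hnn : ∀ t, 0 ≤ u t)
    (hfeas : ∀ t, 1 ≤ t → t ≤ T → ymin ≤ wbN g u ynat t)
    (hopt : ∀ u' : ℕ → ℝ, (∀ t, 0 ≤ u' t) →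
      (∀ t, 1 ≤ t → t ≤ T → ymin ≤ wbN g u' ynat t) →
      ∑ t ∈ Finset.range T, u t ≤ ∑ t ∈ Finset.range T, u' t) :
    ∀ t < T, wbN g u ynat (t + 1) = ymin ∨ u t = 0 := by
  -- g k is antitone for k ≥ 1
  have hgp := gp_nonpos_of_pos_index g gp hderiv τ₀ α hα0 hpos hneg hsep1
  have hanti : ∀ k, 1 ≤ k → Antitone (g k) := by
    intro k hk
    apply antitone_of_deriv_nonpos
    · intro z; exact (hderiv k z).differentiableAt
    · intro z; rw [(hderiv k z).deriv]; exact hgp k z hk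
  intro t₀ ht₀
  by_contra hcon
  push_neg at hcon
  obtain ⟨hy, hu⟩ := hcon
  have hslack : ymin < wbN g u ynat (t₀ + 1) :=
    lt_of_le_of_ne (hfeas (t₀ + 1) (by omega) (by omega)) (Ne.symm hy)
  have hu0 : 0 < u t₀ := (hnn t₀).lt_of_ne (Ne.symm hu)
  set s : ℝ := wbN g u ynat (t₀ + 1) - ymin with hs
  have hs0 : 0 < s := by simp [hs]; linarith
  have hcont : ContinuousAt (g 0) (u t₀) := (hderiv 0 (u t₀)).continuousAt
  rw [Metric.continuousAt_iff] at hcont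
  obtain ⟨δ, hδ0, hδ⟩ := hcont s hs0
  set ε : ℝ := min (u t₀) (δ / 2) with hε
  have hε0 : 0 < ε := lt_min hu0 (by linarith)
  have hεu : ε ≤ u t₀ := min_le_left _ _
  have hεδ : ε < δ := lt_of_le_of_lt (min_le_right _ _) (by linarith)
  set u' : ℕ → ℝ := Function.update u t₀ (u t₀ - ε) with hu'
  have hu't₀ : u' t₀ = u t₀ - ε := Function.update_self _ _ _
  have hu'ne : ∀ j, j ≠ t₀ → u' j = u j := by
    intro j hj; exact Function.update_of_ne hj _ _
  have hnn' : ∀ t, 0 ≤ u' t := by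
    intro t
    by_cases h : t = t₀
    · subst h; rw [hu't₀]; linarith
    · rw [hu'ne t h]; exact hnn t
  have hfeas' : ∀ t, 1 ≤ t → t ≤ T → ymin ≤ wbN g u' ynat t := by
    intro t h1 hT
    obtain ⟨t', rfl⟩ : ∃ t', t = t' + 1 := ⟨t - 1, by omega⟩
    rcases lt_or_ge t' t₀ with hlt | hge
    · -- no index affected
      have : wbN g u' ynat (t' + 1) = wbN g u ynat (t' + 1) := by
        simp only [wbN]
        congr 1
        apply Finset.sum_congr rfl
        intro k hkmem
        rw [hu'ne (t' - k) (by rw [Finset.mem_range] at hkmem; omega)]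
      rw [this]; exact hfeas (t' + 1) h1 hT
    · have hdiffsum : ∑ k ∈ Finset.range (t' + 1), (g k (u' (t' - k)) - g k (u (t' - k)))
          = g (t' - t₀) (u t₀ - ε) - g (t' - t₀) (u t₀) := by
        rw [Finset.sum_eq_single (t' - t₀)]
        · have h1' : t' - (t' - t₀) = t₀ := by omega
          rw [h1', hu't₀]
        · intro k hkmem hkne
          rw [Finset.mem_range] at hkmem
          rw [hu'ne (t' - k) (by omega)]
          ring
        · intro h
          exact absurd (Finset.mem_range.mpr (by omega)) h
      have hsplit : wbN g u' ynat (t' + 1)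
          = wbN g u ynat (t' + 1) + (g (t' - t₀) (u t₀ - ε) - g (t' - t₀) (u t₀)) := by
        simp only [wbN]
        rw [← hdiffsum, Finset.sum_sub_distrib]
        ring
      rcases eq_or_lt_of_le hge with heq | hgt
      · -- t' = t₀ : use the slack and continuity
        have hk0 : t' - t₀ = 0 := by omega
        have hdist : dist (u t₀ - ε) (u t₀) < δ := by
          rw [Real.dist_eq]
          rw [show u t₀ - ε - u t₀ = -ε by ring, abs_neg, abs_of_pos hε0]
          exact hεδ
        have hval := hδ hdist
        rw [Real.dist_eq, abs_lt] at hval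
        rw [hsplit, hk0]
        have ht't₀ : t' + 1 = t₀ + 1 := by omega
        rw [ht't₀]
        simp only [hs] at hval ⊢
        linarith [hval.1]
      · -- t' > t₀ : index t' - t₀ ≥ 1, g antitone, change nonneg
        have hk1 : 1 ≤ t' - t₀ := by omega
        have := hanti (t' - t₀) hk1 (show u t₀ - ε ≤ u t₀ by linarith)
        have hfe := hfeas (t' + 1) h1 hT
        rw [hsplit]
        linarith
  have hsum := hopt u' hnn' hfeas'
  have hmem : t₀ ∈ Finset.range T := Finset.mem_range.mpr ht₀
  have hsum' : ∑ t ∈ Finset.range T, u' t = (∑ t ∈ Finset.range T, u t) - ε := by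
    rw [hu', Finset.sum_update_of_mem hmem,
      ← Finset.sum_erase_add _ u hmem, Finset.sdiff_singleton_eq_erase]
    ring
  rw [hsum'] at hsum
  linarith
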